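/- Let ψ ∈ L²(ℝ²) and let j ≥ 0 be an integer. Suppose the family {D_{2^j} (T^t_{(k,l)})^{2^{-2j}} ψ : k, l ∈ ℤ} is orthonormal in L²(ℝ²), and let W be its closed linear span. Then the family {T^t_{(k',l')} D_{2^j} (T^t_{(k,l)})^{2^{-2j}} ψ : k', l' ∈ ℤ, k, l ∈ {0, ..., 2^j − 1}} is a Parseval frame for W: for every f ∈ W, ‖f‖²_{L²(ℝ²)} = Σ_{k',l'∈ℤ} Σ_{k,l=0}^{2^j−1} |⟨f, T^t_{(k',l')} D_{2^j} (T^t_{(k,l)})^{2^{-2j}} ψ⟩|². -/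

import Mathlib

/-!
When `λ a² = 1`, moving the twisted translation `T^t_{(k',l')}` past `D_a (T^t_{(k,l)})^λ` costs
only a unimodular phase and turns the inner index into `(a k' + k, a l' + l)`. For `a = 2^j`,
`(k', l', k, l) ↦ (2^j k' + k, 2^j l' + l)` is a bijection `ℤ² × {0,…,2^j-1}² → ℤ²` (division with
remainder), so the new family is the orthonormal family spanning `W`, reindexed and multiplied by
phases. It is therefore again an orthonormal family with closed span `W`, i.e. a Hilbert basis of
`W`, and Parseval's identity is the claim.
-/

open MeasureTheory Complex

noncomputable section

/-- The `λ`-twisted translation `(T^t_{(k,l)})^λ f (x,y) = e^{πiλ(xl - yk)} f(x-k, y-l)`. -/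
def twistedTranslate (lam : ℝ) (k l : ℤ) (f : ℝ × ℝ → ℂ) : ℝ × ℝ → ℂ :=
  fun p => Complex.exp ((↑(Real.pi * lam * (p.1 * l - p.2 * k)) : ℂ) * Complex.I) *
    f (p.1 - k, p.2 - l)

/-- The dilation `D_a f (x,y) = a f(ax, ay)`. -/
def dilate (a : ℝ) (f : ℝ × ℝ → ℂ) : ℝ × ℝ → ℂ :=
  fun p => (a : ℂ) * f (a * p.1, a * p.2)

/-- The kernel `K^λ_g(ξ,η) = ∫_ℝ g(x, η-ξ) e^{πiλx(η+ξ)} dx` of the Weyl transform `W_λ(g)`. -/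
def weylKernel (lam : ℝ) (g : ℝ × ℝ → ℂ) (ξ η : ℝ) : ℂ :=
  ∫ x : ℝ, g (x, η - ξ) * Complex.exp ((↑(Real.pi * lam * x * (η + ξ)) : ℂ) * Complex.I)

lemma memℒp_unimodular_mul {e f : ℝ × ℝ → ℂ} (he : AEStronglyMeasurable e volume)
    (hnorm : ∀ x, ‖e x‖ = 1) (hf : MemLp f 2 (volume : Measure (ℝ × ℝ))) :
    MemLp (fun x => e x * f x) 2 volume := by
  refine ⟨he.mul hf.1, ?_⟩
  have h : eLpNorm (fun x => e x * f x) 2 volume = eLpNorm f 2 volume := by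
    apply eLpNorm_congr_norm_ae
    filter_upwards with x
    rw [norm_mul, hnorm x, one_mul]
  rw [h]; exact hf.2

lemma memℒp_twistedTranslate (lam : ℝ) (k l : ℤ) {f : ℝ × ℝ → ℂ}
    (hf : MemLp f 2 (volume : Measure (ℝ × ℝ))) :
    MemLp (twistedTranslate lam k l f) 2 volume := by
  have hmp : MeasurePreserving (fun p : ℝ × ℝ => p - ((k : ℝ), (l : ℝ))) volume volume :=
    measurePreserving_sub_right volume _
  have h2 : MemLp (fun p : ℝ × ℝ => f (p.1 - k, p.2 - l)) 2 volume := by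
    have := hf.comp_measurePreserving hmp
    simpa [Function.comp_def, Prod.sub_def] using this
  have he : AEStronglyMeasurable (fun p : ℝ × ℝ =>
      Complex.exp ((↑(Real.pi * lam * (p.1 * l - p.2 * k)) : ℂ) * Complex.I)) volume := by
    apply Continuous.aestronglyMeasurable
    fun_prop
  exact memℒp_unimodular_mul he (fun x => by simp [Complex.norm_exp]) h2

lemma memℒp_dilate {a : ℝ} (ha : a ≠ 0) {f : ℝ × ℝ → ℂ}
    (hf : MemLp f 2 (volume : Measure (ℝ × ℝ))) :
    MemLp (dilate a f) 2 volume := by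
  have hmap : Measure.map (fun p : ℝ × ℝ => a • p) (volume : Measure (ℝ × ℝ)) =
      ENNReal.ofReal |(a ^ Module.finrank ℝ (ℝ × ℝ))⁻¹| • volume :=
    Measure.map_addHaar_smul volume ha
  have hmem : MemLp f 2 (Measure.map (fun p : ℝ × ℝ => a • p) (volume : Measure (ℝ × ℝ))) := by
    rw [hmap]
    exact hf.smul_measure (by finiteness)
  have hcomp : MemLp (f ∘ fun p : ℝ × ℝ => a • p) 2 (volume : Measure (ℝ × ℝ)) :=
    (memLp_map_measure_iff hmem.1 (by fun_prop)).mp hmem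
  have h : MemLp (fun p : ℝ × ℝ => f (a * p.1, a * p.2)) 2 volume := hcomp
  exact h.const_mul (a : ℂ)

/-- The twisted translation as an operator on `L²(ℝ²)`. -/
def twistedTranslateLp (lam : ℝ) (k l : ℤ) (f : Lp ℂ 2 (volume : Measure (ℝ × ℝ))) :
    Lp ℂ 2 (volume : Measure (ℝ × ℝ)) :=
  (memℒp_twistedTranslate lam k l (Lp.memLp f)).toLp _

/-- The dilation as an operator on `L²(ℝ²)` (with junk value `0` for `a = 0`). -/
def dilateLp (a : ℝ) (f : Lp ℂ 2 (volume : Measure (ℝ × ℝ))) :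
    Lp ℂ 2 (volume : Measure (ℝ × ℝ)) :=
  if ha : a = 0 then 0 else (memℒp_dilate ha (Lp.memLp f)).toLp _

section Hilbert

open scoped InnerProductSpace

variable {ι 𝕜 E : Type*} [RCLike 𝕜] [NormedAddCommGroup E] [InnerProductSpace 𝕜 E]

theorem Orthonormal.unimodular_smul {v : ι → E} (hv : Orthonormal 𝕜 v) {c : ι → 𝕜}
    (hc : ∀ i, ‖c i‖ = 1) : Orthonormal 𝕜 fun i => c i • v i := by
  refine ⟨fun i => by rw [norm_smul, hc i, hv.1 i, one_mul], fun i j hij => ?_⟩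
  simp only
  rw [inner_smul_left, inner_smul_right, hv.2 hij, mul_zero, mul_zero]

theorem Submodule.span_range_smul_of_ne_zero {K V : Type*} [DivisionRing K] [AddCommGroup V]
    [Module K V] (v : ι → V) {c : ι → K} (hc : ∀ i, c i ≠ 0) :
    Submodule.span K (Set.range fun i => c i • v i) = Submodule.span K (Set.range v) := by
  apply le_antisymm <;> rw [Submodule.span_le] <;> rintro _ ⟨i, rfl⟩
  · exact Submodule.smul_mem _ _ (Submodule.subset_span ⟨i, rfl⟩)
  · rw [← inv_smul_smul₀ (hc i) (v i)]
    exact Submodule.smul_mem _ _ (Submodule.subset_span ⟨i, rfl⟩)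

theorem Orthonormal.norm_sq_eq_tsum_of_mem_closure_span [CompleteSpace E] {v : ι → E}
    (hv : Orthonormal 𝕜 v) {x : E}
    (hx : x ∈ (Submodule.span 𝕜 (Set.range v)).topologicalClosure) :
    ‖x‖ ^ 2 = ∑' i, ‖⟪v i, x⟫_𝕜‖ ^ 2 := by
  set K := (Submodule.span 𝕜 (Set.range v)).topologicalClosure
  have hvK : ∀ i, v i ∈ K := fun i =>
    Submodule.le_topologicalClosure _ (Submodule.subset_span ⟨i, rfl⟩)
  set b : ι → K := fun i => ⟨v i, hvK i⟩
  have hb : Orthonormal 𝕜 b := hv.codRestrict K hvK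
  have hsp : (Submodule.span 𝕜 (Set.range b))ᗮ = ⊥ := by
    rw [Submodule.eq_bot_iff]
    intro w hw
    have hwv : (w : E) ∈ Kᗮ := by
      have hspan : Submodule.span 𝕜 (Set.range v) ≤ (𝕜 ∙ (w : E))ᗮ := by
        rw [Submodule.span_le]
        rintro _ ⟨i, rfl⟩
        have hbw : ⟪b i, w⟫_𝕜 = 0 :=
          Submodule.inner_right_of_mem_orthogonal (Submodule.subset_span (Set.mem_range_self i)) hw
        exact Submodule.mem_orthogonal_singleton_iff_inner_left.mpr hbw
      rw [Submodule.orthogonal_closure, Submodule.mem_orthogonal]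
      exact fun u hu => Submodule.mem_orthogonal_singleton_iff_inner_left.mp (hspan hu)
    have hw0 : (w : E) ∈ K ⊓ Kᗮ := ⟨w.2, hwv⟩
    rw [K.inf_orthogonal_eq_bot, Submodule.mem_bot] at hw0
    exact Subtype.ext hw0
  set B := HilbertBasis.mkOfOrthogonalEqBot hb hsp
  calc ‖x‖ ^ 2 = ‖B.repr ⟨x, hx⟩‖ ^ 2 := by rw [B.repr.norm_map]; rfl
    _ = ∑' i, ‖B.repr ⟨x, hx⟩ i‖ ^ 2 := by
      exact_mod_cast lp.norm_rpow_eq_tsum (p := 2) (by norm_num) (B.repr ⟨x, hx⟩)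
    _ = ∑' i, ‖⟪v i, x⟫_𝕜‖ ^ 2 := by
      simp only [B.repr_apply_apply, B, HilbertBasis.coe_mkOfOrthogonalEqBot]
      rfl

end Hilbert

theorem twistedTranslate_one_dilate_twistedTranslate {lam a : ℝ} (h : lam * a ^ 2 = 1)
    {k' l' k l K L : ℤ} (hK : (K : ℝ) = a * k' + k) (hL : (L : ℝ) = a * l' + l)
    (g : ℝ × ℝ → ℂ) :
    twistedTranslate 1 k' l' (dilate a (twistedTranslate lam k l g)) =
      exp (↑(Real.pi * (lam * a) * (l' * k - k' * l)) * I) •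
        dilate a (twistedTranslate lam K L g) := by
  funext ⟨x, y⟩
  simp only [twistedTranslate, dilate, Pi.smul_apply, smul_eq_mul]
  rw [show a * (x - k') - k = a * x - K by rw [hK]; ring,
    show a * (y - l') - l = a * y - L by rw [hL]; ring]
  simp only [mul_left_comm _ (a : ℂ), ← mul_assoc, ← exp_add]
  congr 3
  have h' : (lam : ℂ) * a ^ 2 = 1 := by exact_mod_cast h
  rw [hK, hL]
  push_cast
  linear_combination (-↑Real.pi * I * (x * l' - y * k') : ℂ) * h'

theorem twistedTranslate_congr_ae (lam : ℝ) (k l : ℤ) {f g : ℝ × ℝ → ℂ}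
    (h : f =ᵐ[volume] g) :
    twistedTranslate lam k l f =ᵐ[volume] twistedTranslate lam k l g := by
  have hshift := (measurePreserving_sub_right (volume : Measure (ℝ × ℝ))
    ((k : ℝ), (l : ℝ))).quasiMeasurePreserving.ae_eq_comp h
  filter_upwards [hshift] with p hp
  simp only [Function.comp_apply, Prod.sub_def] at hp
  simp only [twistedTranslate, hp]

theorem dilate_congr_ae {a : ℝ} (ha : a ≠ 0) {f g : ℝ × ℝ → ℂ}
    (h : f =ᵐ[volume] g) : dilate a f =ᵐ[volume] dilate a g := by
  have hqmp : Measure.QuasiMeasurePreserving (fun p : ℝ × ℝ => a • p) volume volume := by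
    refine ⟨by fun_prop, ?_⟩
    rw [Measure.map_addHaar_smul volume ha]
    exact Measure.smul_absolutelyContinuous
  filter_upwards [hqmp.ae_eq_comp h] with p hp
  simp only [Function.comp_apply, Prod.smul_def, smul_eq_mul] at hp
  simp only [dilate, hp]

theorem coeFn_dilateLp_twistedTranslateLp {a : ℝ} (ha : a ≠ 0) (lam : ℝ) (k l : ℤ)
    (F : Lp ℂ 2 (volume : Measure (ℝ × ℝ))) :
    dilateLp a (twistedTranslateLp lam k l F) =ᵐ[volume] dilate a (twistedTranslate lam k l F) := by
  rw [dilateLp, dif_neg ha]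
  exact (MemLp.coeFn_toLp _).trans (dilate_congr_ae ha (MemLp.coeFn_toLp _))

theorem twistedTranslateLp_one_dilateLp_twistedTranslateLp {lam a : ℝ} (ha : a ≠ 0)
    (h : lam * a ^ 2 = 1) {k' l' k l K L : ℤ} (hK : (K : ℝ) = a * k' + k)
    (hL : (L : ℝ) = a * l' + l) (F : Lp ℂ 2 (volume : Measure (ℝ × ℝ))) :
    twistedTranslateLp 1 k' l' (dilateLp a (twistedTranslateLp lam k l F)) =
      exp (↑(Real.pi * (lam * a) * (l' * k - k' * l)) * I) •
        dilateLp a (twistedTranslateLp lam K L F) := by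
  apply Lp.ext
  calc _ =ᵐ[volume] twistedTranslate 1 k' l' (dilate a (twistedTranslate lam k l F)) :=
        (MemLp.coeFn_toLp _).trans
          (twistedTranslate_congr_ae _ _ _ (coeFn_dilateLp_twistedTranslateLp ha _ _ _ _))
    _ = exp (↑(Real.pi * (lam * a) * (l' * k - k' * l)) * I) •
          dilate a (twistedTranslate lam K L F) :=
        twistedTranslate_one_dilate_twistedTranslate h hK hL _
    _ =ᵐ[volume] _ :=
        ((coeFn_dilateLp_twistedTranslateLp ha _ _ _ _).symm.const_smul _).trans
          (Lp.coeFn_smul _ _).symm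

def intPairDivModEquiv (n : ℕ) [NeZero n] : (ℤ × ℤ) × Fin n × Fin n ≃ ℤ × ℤ :=
  (Equiv.prodProdProdComm ℤ (Fin n) ℤ (Fin n)).symm.trans
    ((Int.divModEquiv n).symm.prodCongr (Int.divModEquiv n).symm)

@[simp]
theorem intPairDivModEquiv_apply (n : ℕ) [NeZero n] (q : (ℤ × ℤ) × Fin n × Fin n) :
    intPairDivModEquiv n q = (q.1.1 * n + (q.2.1 : ℕ), q.1.2 * n + (q.2.2 : ℕ)) :=
  rfl

open scoped ComplexInnerProductSpace

/-- For `ψ ∈ L²(ℝ²)` and an integer `j ≥ 0`, if the family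
`{D_{2^j} (T^t_{(k,l)})^{2^{-2j}} ψ : k, l ∈ ℤ}` is orthonormal in `L²(ℝ²)` with closed linear
span `W`, then `{T^t_{(k',l')} D_{2^j} (T^t_{(k,l)})^{2^{-2j}} ψ : k', l' ∈ ℤ,
k, l ∈ {0, ..., 2^j - 1}}` is a Parseval frame for `W`. -/
theorem statement_8 (ψ : ℝ × ℝ → ℂ) (hψ : MemLp ψ 2 (volume : Measure (ℝ × ℝ))) (j : ℕ)
    (horth : Orthonormal ℂ (fun kl : ℤ × ℤ =>
      dilateLp ((2 : ℝ) ^ j) (twistedTranslateLp ((2 : ℝ) ^ (-(2 * (j : ℤ)))) kl.1 kl.2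
        (hψ.toLp ψ))))
    (W : Submodule ℂ (Lp ℂ 2 (volume : Measure (ℝ × ℝ))))
    (hW : W = (Submodule.span ℂ (Set.range fun kl : ℤ × ℤ =>
      dilateLp ((2 : ℝ) ^ j) (twistedTranslateLp ((2 : ℝ) ^ (-(2 * (j : ℤ)))) kl.1 kl.2
        (hψ.toLp ψ)))).topologicalClosure) :
    ∀ f ∈ W, ‖f‖ ^ 2 = ∑' q : (ℤ × ℤ) × Fin (2 ^ j) × Fin (2 ^ j),
      ‖⟪f, twistedTranslateLp 1 q.1.1 q.1.2
          (dilateLp ((2 : ℝ) ^ j) (twistedTranslateLp ((2 : ℝ) ^ (-(2 * (j : ℤ))))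
            ((q.2.1 : ℕ) : ℤ) ((q.2.2 : ℕ) : ℤ) (hψ.toLp ψ)))⟫‖ ^ 2 := by
  intro f hf
  have : NeZero (2 ^ j) := ⟨pow_ne_zero _ two_ne_zero⟩
  set a : ℝ := 2 ^ j
  set lam : ℝ := 2 ^ (-(2 * (j : ℤ)))
  have ha : a ≠ 0 := by positivity
  have hlam : lam * a ^ 2 = 1 := by
    rw [← pow_mul, ← zpow_natCast, ← zpow_add₀ two_ne_zero]
    push_cast
    ring_nf
    simp
  set e : ℤ × ℤ → Lp ℂ 2 (volume : Measure (ℝ × ℝ)) := fun kl =>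
    dilateLp a (twistedTranslateLp lam kl.1 kl.2 (hψ.toLp ψ))
  set σ := intPairDivModEquiv (2 ^ j)
  have hphase : ∀ q : (ℤ × ℤ) × Fin (2 ^ j) × Fin (2 ^ j), ∃ c : ℂ, ‖c‖ = 1 ∧
      twistedTranslateLp 1 q.1.1 q.1.2 (dilateLp a (twistedTranslateLp lam
        ((q.2.1 : ℕ) : ℤ) ((q.2.2 : ℕ) : ℤ) (hψ.toLp ψ))) = c • e (σ q) := fun q =>
    ⟨_, norm_exp_ofReal_mul_I _, twistedTranslateLp_one_dilateLp_twistedTranslateLp ha hlam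
      (by simp [σ, a]; ring) (by simp [σ, a]; ring) _⟩
  choose c hc hfamily using hphase
  have hf' : f ∈ (Submodule.span ℂ (Set.range fun q => c q • e (σ q))).topologicalClosure := by
    rw [Submodule.span_range_smul_of_ne_zero (fun q => e (σ q)) fun q => norm_ne_zero_iff.mp
      (by simp [hc q]),
      show (Set.range fun q => e (σ q)) = Set.range e from σ.surjective.range_comp e]
    exact hW ▸ hf
  rw [((horth.comp σ σ.injective).unimodular_smul hc).norm_sq_eq_tsum_of_mem_closure_span hf']
  exact tsum_congr fun q => by rw [hfamily, norm_inner_symm]; rfl
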